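/- arXiv:2012.08310 — 8 statements merged into one kernel-verified Lean document; each statement's English description precedes it below -/
import Mathlib

section
/- Let k ≥ 1 and a, b ∈ ℂ^k. Define c ∈ ℂ^k by letting c_j be the coefficient of t^j in the composite polynomial φ_a(φ_b(t)), where φ_a(t) = Σ_{s=1}^k a_s t^s and φ_b(t) = Σ_{s=1}^k b_s t^s, for 1 ≤ j ≤ k. Then M(c) = M(a)·M(b); i.e., the assignment φ ↦ M(coefficients of φ) turns composition of reparametrizations (truncated mod t^{k+1}) into matrix multiplication. -/
/-!
Row `i` of `M(a)` lists the coefficients of `t, …, t^k` in `φ_a^i`. Expanding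
`(φ_a ∘ φ_b)^i = φ_a^i ∘ φ_b = Σ_e [t^e] φ_a^i · φ_b^e`, and using that `φ_b^e` has order `e`,
only `1 ≤ e ≤ k` contribute to the coefficients of `t, …, t^k`: this is the matrix product
`M(a) M(b)`. Finally `φ_c ≡ φ_a ∘ φ_b` modulo `t^(k+1)`, hence so are their `i`-th powers.
-/

/-- The matrix `M(a)` with `M(a)_{ij} = Σ_{s_1+⋯+s_i = j, s_l ≥ 1} a_{s_1} ⋯ a_{s_i}`. -/
noncomputable def Mmat (k : ℕ) (a : Fin k → ℂ) : Matrix (Fin k) (Fin k) ℂ :=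
  fun i j =>
    ∑ s ∈ (Finset.Nat.antidiagonalTuple (i.val + 1) (j.val + 1)).filter
        (fun s => ∀ l, 0 < s l),
      ∏ l, (if h : 1 ≤ s l ∧ s l ≤ k then a ⟨s l - 1, by omega⟩ else 0)

/-- The reparametrization `φ(t) = Σ_{s=1}^k a_s t^s`. -/
noncomputable def phiPoly (k : ℕ) (a : Fin k → ℂ) : Polynomial ℂ :=
  ∑ s : Fin k, Polynomial.C (a s) * Polynomial.X ^ (s.val + 1)

open Polynomial Finset

theorem Finset.Nat.sum_antidiagonalTuple_succ {M : Type*} [AddCommMonoid M] (k n : ℕ)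
    (f : (Fin (k + 1) → ℕ) → M) :
    ∑ s ∈ Nat.antidiagonalTuple (k + 1) n, f s =
      ∑ p ∈ antidiagonal n, ∑ t ∈ Nat.antidiagonalTuple k p.2, f (Fin.cons p.1 t) := by
  simp only [Finset.sum, Nat.antidiagonalTuple, Multiset.Nat.antidiagonalTuple,
    List.Nat.antidiagonalTuple, Multiset.map_coe, Multiset.sum_coe, List.flatMap_def,
    List.map_flatten, List.sum_flatten, List.map_map, Function.comp_def]
  rfl

namespace Polynomial

variable {R : Type*}

theorem coeff_prod_univ_fin [CommSemiring R] {n : ℕ} (p : Fin n → R[X]) (m : ℕ) :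
    (∏ l, p l).coeff m = ∑ s ∈ Finset.Nat.antidiagonalTuple n m, ∏ l, (p l).coeff (s l) := by
  induction n generalizing m with
  | zero => cases m <;> simp [coeff_one]
  | succ n ih =>
    simp only [Fin.prod_univ_succ, coeff_mul, Finset.Nat.sum_antidiagonalTuple_succ, ih,
      Finset.mul_sum, Fin.cons_zero, Fin.cons_succ]

theorem coeff_pow_eq_sum_antidiagonalTuple [CommSemiring R] (p : R[X]) (n m : ℕ) :
    (p ^ n).coeff m = ∑ s ∈ Finset.Nat.antidiagonalTuple n m, ∏ l, p.coeff (s l) := by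
  simpa using coeff_prod_univ_fin (fun _ : Fin n => p) m

theorem coeff_pow_eq_zero_of_lt [CommSemiring R] {q : R[X]} (hq : q.coeff 0 = 0) {m n : ℕ}
    (h : m < n) : (q ^ n).coeff m = 0 :=
  X_pow_dvd_iff.mp (pow_dvd_pow_of_dvd (X_dvd_iff.mpr hq) n) m h

theorem coeff_comp_eq_sum_range [CommSemiring R] (p : R[X]) {q : R[X]} (hq : q.coeff 0 = 0)
    {m N : ℕ} (hm : m ≤ N) :
    (p.comp q).coeff m = ∑ e ∈ range (N + 1), p.coeff e * (q ^ e).coeff m := by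
  rw [comp_eq_sum_left, sum_def, finsetSum_coeff]
  simp only [coeff_C_mul]
  refine Finset.sum_congr_of_eq_on_inter ?_ ?_ fun _ _ _ => rfl
  · intro e _ he
    rw [coeff_pow_eq_zero_of_lt hq (by rw [mem_range] at he; omega), mul_zero]
  · intro e _ he
    rw [notMem_support_iff.mp he, zero_mul]

theorem X_pow_dvd_sub_iff [Ring R] {p q : R[X]} {N : ℕ} :
    X ^ N ∣ p - q ↔ ∀ m < N, p.coeff m = q.coeff m := by
  simp [X_pow_dvd_iff, sub_eq_zero]

end Polynomial

theorem coeff_phiPoly (k : ℕ) (a : Fin k → ℂ) (m : ℕ) :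
    (phiPoly k a).coeff m = if h : 1 ≤ m ∧ m ≤ k then a ⟨m - 1, by omega⟩ else 0 := by
  simp only [phiPoly, finsetSum_coeff, coeff_C_mul_X_pow]
  split_ifs with h
  · rw [Finset.sum_eq_single ⟨m - 1, by omega⟩ (fun s _ hs => if_neg ?_) (by simp)]
    · exact if_pos (by dsimp only; omega)
    · exact fun hm => hs (Fin.ext (by dsimp only; omega))
  · exact Finset.sum_eq_zero fun s _ => if_neg (by omega)

theorem coeff_zero_phiPoly (k : ℕ) (a : Fin k → ℂ) : (phiPoly k a).coeff 0 = 0 := by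
  simp [coeff_phiPoly]

theorem Mmat_apply_eq_coeff_pow (k : ℕ) (a : Fin k → ℂ) (i j : Fin k) :
    Mmat k a i j = (phiPoly k a ^ (i.val + 1)).coeff (j.val + 1) := by
  rw [coeff_pow_eq_sum_antidiagonalTuple, Mmat, Finset.sum_filter_of_ne]
  · simp only [coeff_phiPoly]
  · intro s _ hs l
    by_contra h
    exact hs (Finset.prod_eq_zero (Finset.mem_univ l) (dif_neg (by omega)))

theorem X_pow_dvd_phiPoly_sub (k : ℕ) (c : Fin k → ℂ) {p : ℂ[X]} (h0 : p.coeff 0 = 0)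
    (hc : ∀ j : Fin k, c j = p.coeff (j.val + 1)) : X ^ (k + 1) ∣ phiPoly k c - p := by
  refine X_pow_dvd_sub_iff.mpr fun m hm => ?_
  rw [coeff_phiPoly]
  split_ifs with h
  · rw [hc]; congr 1; dsimp only; omega
  · rw [show m = 0 by omega, h0]

theorem Mmat_comp_eq_mul_general (k : ℕ) (a b c : Fin k → ℂ)
    (hc : ∀ j : Fin k, c j = ((phiPoly k a).comp (phiPoly k b)).coeff (j.val + 1)) :
    Mmat k c = Mmat k a * Mmat k b := by
  have hcomp : X ^ (k + 1) ∣ phiPoly k c - (phiPoly k a).comp (phiPoly k b) := by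
    refine X_pow_dvd_phiPoly_sub k c ?_ hc
    rw [coeff_zero_eq_eval_zero, eval_comp, ← coeff_zero_eq_eval_zero, coeff_zero_phiPoly,
      ← coeff_zero_eq_eval_zero, coeff_zero_phiPoly]
  ext i j
  have hj : j.val + 1 ≤ k := j.2
  have hcomp_pow := X_pow_dvd_sub_iff.mp (hcomp.trans (sub_dvd_pow_sub_pow _ _ (i.val + 1)))
  rw [Matrix.mul_apply, Mmat_apply_eq_coeff_pow, hcomp_pow _ (by omega), ← pow_comp,
    coeff_comp_eq_sum_range _ (coeff_zero_phiPoly k b) hj, sum_range_succ',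
    pow_zero, coeff_one, if_neg (by omega), mul_zero, add_zero, ← Fin.sum_univ_eq_sum_range]
  simp only [Mmat_apply_eq_coeff_pow]

/-- If `c_j` is the coefficient of `t^j` in `φ_a(φ_b(t))`, then `M(c) = M(a) · M(b)`:
the assignment `φ ↦ M(coefficients of φ)` turns composition of reparametrizations
(truncated mod `t^{k+1}`) into matrix multiplication. -/
theorem Mmat_comp_eq_mul (k : ℕ) (hk : 1 ≤ k) (a b c : Fin k → ℂ)
    (hc : ∀ j : Fin k, c j = ((phiPoly k a).comp (phiPoly k b)).coeff (j.val + 1)) :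
    Mmat k c = Mmat k a * Mmat k b :=
  Mmat_comp_eq_mul_general k a b c hc
end

section
/- For all 1 ≤ s, t ≤ k one has the bracket formula [e_s, e_t] = e_s e_t − e_t e_s = (s − t)·e_{s+t−1} (with the convention e_m = 0 for m > k). Consequently g_k = span_ℂ{e_1, …, e_k} is a Lie subalgebra of gl_k(ℂ), and g_k = ℂ·e_1 ⊕ u_k where u_k = span_ℂ{e_2, …, e_k}. -/
/-- The matrix `e_s` with `(e_s)_{i,j} = i` if `j = i + s - 1` and `0` otherwise
(1-indexed); for `s > k` this is automatically the zero matrix. -/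
def Emat (k s : ℕ) : Matrix (Fin k) (Fin k) ℂ :=
  fun i j => if (j : ℕ) + 1 = (i : ℕ) + s then ((i : ℕ) + 1 : ℂ) else 0

/-- `g_k = span_ℂ{e_1, …, e_k}`, the Lie algebra of the reparametrization group `G_k`. -/
noncomputable def gkAlg (k : ℕ) : Submodule ℂ (Matrix (Fin k) (Fin k) ℂ) :=
  Submodule.span ℂ (Emat k '' {s | 1 ≤ s ∧ s ≤ k})

/-- `u_k = span_ℂ{e_2, …, e_k}`. -/
noncomputable def ukAlg (k : ℕ) : Submodule ℂ (Matrix (Fin k) (Fin k) ℂ) :=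
  Submodule.span ℂ (Emat k '' {s | 2 ≤ s ∧ s ≤ k})

open Submodule

lemma commutator_mem_of_mem_span {R A : Type*} [CommRing R] [Ring A] [Algebra R A]
    {s : Set A} {p : Submodule R A} (hs : ∀ a ∈ s, ∀ b ∈ s, a * b - b * a ∈ p)
    {x y : A} (hx : x ∈ span R s) (hy : y ∈ span R s) : x * y - y * x ∈ p := by
  have hB : ∀ a b : A, (LinearMap.mul R A - (LinearMap.mul R A).flip) a b = a * b - b * a :=
    fun _ _ => rfl
  simpa only [hB] using LinearMap.BilinMap.apply_apply_mem_of_mem_span p s s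
    (LinearMap.mul R A - (LinearMap.mul R A).flip) (by simpa only [hB]) x y hx hy

namespace Emat

variable {k : ℕ}

lemma eq_zero_of_lt {m : ℕ} (h : k < m) : Emat k m = 0 := by
  ext i j
  exact if_neg (by omega)

lemma apply_self {s : ℕ} (hs : 2 ≤ s) (i : Fin k) : Emat k s i i = 0 :=
  if_neg (by omega)

lemma mul_apply {s t : ℕ} (hs : 1 ≤ s) (ht : 1 ≤ t) (i j : Fin k) :
    (Emat k s * Emat k t) i j =
      if (j : ℕ) + 2 = i + s + t then ((i : ℂ) + 1) * ((i : ℂ) + s) else 0 := by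
  rw [Matrix.mul_apply]
  split_ifs with h
  · -- the only surviving summand is the column `l = i + s - 1` of `e_s`
    rw [Fintype.sum_eq_single ⟨i + s - 1, by omega⟩]
    · simp only [Emat]
      rw [if_pos (by omega), if_pos (by omega), Nat.cast_sub (by omega)]
      push_cast
      ring
    · intro l hl
      rw [Emat, if_neg (fun h' => hl (Fin.ext (by simp only; omega))), zero_mul]
  · refine Finset.sum_eq_zero fun l _ => ?_
    simp only [Emat]
    split_ifs <;> first | omega | simp

lemma commutator {s t : ℕ} (hs : 1 ≤ s) (ht : 1 ≤ t) :
    Emat k s * Emat k t - Emat k t * Emat k s = ((s : ℂ) - t) • Emat k (s + t - 1) := by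
  ext i j
  simp only [Matrix.sub_apply, Matrix.smul_apply, mul_apply hs ht, mul_apply ht hs, Emat,
    smul_eq_mul]
  by_cases h : (j : ℕ) + 2 = i + s + t
  · rw [if_pos h, if_pos (by omega), if_pos (by omega)]
    ring
  · rw [if_neg h, if_neg (by omega), if_neg (by omega)]
    simp

end Emat

lemma gkAlg_commutator_mem {k : ℕ} {x y : Matrix (Fin k) (Fin k) ℂ}
    (hx : x ∈ gkAlg k) (hy : y ∈ gkAlg k) : x * y - y * x ∈ gkAlg k := by
  refine commutator_mem_of_mem_span ?_ hx hy
  rintro _ ⟨s, ⟨hs, -⟩, rfl⟩ _ ⟨t, ⟨ht, -⟩, rfl⟩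
  rw [Emat.commutator hs ht]
  by_cases hst : s + t - 1 ≤ k
  · exact smul_mem _ _ (subset_span ⟨s + t - 1, ⟨by omega, hst⟩, rfl⟩)
  · rw [Emat.eq_zero_of_lt (by omega), smul_zero]
    exact zero_mem _

lemma span_Emat_one_sup_ukAlg (k : ℕ) [NeZero k] : span ℂ {Emat k 1} ⊔ ukAlg k = gkAlg k := by
  have hsplit : {s | 1 ≤ s ∧ s ≤ k} = {1} ∪ {s | 2 ≤ s ∧ s ≤ k} := by
    ext s
    have := NeZero.one_le (n := k)
    simp only [Set.mem_ofPred_eq, Set.mem_union, Set.mem_singleton_iff]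
    omega
  rw [gkAlg, hsplit, Set.image_union, Set.image_singleton, span_union, ukAlg]

lemma ukAlg_le_ker_entry {k : ℕ} (i : Fin k) :
    ukAlg k ≤ LinearMap.ker (Matrix.entryLinearMap ℂ ℂ i i) := by
  rw [ukAlg, span_le]
  rintro _ ⟨s, ⟨hs, -⟩, rfl⟩
  exact Emat.apply_self hs i

lemma Emat_one_notMem_ukAlg (k : ℕ) [NeZero k] : Emat k 1 ∉ ukAlg k := fun h => by
  have h00 : Emat k 1 0 0 = 0 := ukAlg_le_ker_entry 0 h
  simp [Emat] at h00

/-- The bracket formula `[e_s, e_t] = (s - t)·e_{s+t−1}` (with `e_m = 0` for `m > k`);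
consequently `g_k` is a Lie subalgebra of `gl_k(ℂ)` and `g_k = ℂ·e_1 ⊕ u_k`. -/
theorem Emat_bracket_and_gk_decomposition (k : ℕ) [NeZero k] :
    (∀ s t : ℕ, 1 ≤ s → s ≤ k → 1 ≤ t → t ≤ k →
      Emat k s * Emat k t - Emat k t * Emat k s
        = ((s : ℂ) - (t : ℂ)) • Emat k (s + t - 1)) ∧
    (∀ x ∈ gkAlg k, ∀ y ∈ gkAlg k, x * y - y * x ∈ gkAlg k) ∧
    (Submodule.span ℂ {Emat k 1} ⊔ ukAlg k = gkAlg k) ∧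
    (Submodule.span ℂ {Emat k 1} ⊓ ukAlg k = ⊥) :=
  ⟨fun _ _ hs _ ht _ => Emat.commutator hs ht, fun _ hx _ hy => gkAlg_commutator_mem hx hy,
    span_Emat_one_sup_ukAlg k,
    disjoint_iff.mp (disjoint_span_singleton_of_notMem (Emat_one_notMem_ukAlg k)).symm⟩
end

section
/- The subspace u_k = span_ℂ{e_2, …, e_k} is a Lie ideal of g_k, and u_k is a nilpotent Lie algebra (its lower central series reaches zero). -/
/-- The lower central series of `u_k` (with respect to the commutator bracket). -/
noncomputable def lcsU (k : ℕ) : ℕ → Submodule ℂ (Matrix (Fin k) (Fin k) ℂ)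
  | 0 => ukAlg k
  | n + 1 => Submodule.span ℂ {z | ∃ x ∈ ukAlg k, ∃ y ∈ lcsU k n, z = x * y - y * x}

lemma Emat_mul (k s t : ℕ) (hs : 1 ≤ s) (ht : 1 ≤ t) :
    Emat k s * Emat k t = fun (i j : Fin k) =>
      if (j : ℕ) + 2 = (i : ℕ) + s + t then (((i : ℕ) + 1) * ((i : ℕ) + s) : ℂ) else 0 := by
  funext i j
  show (Emat k s * Emat k t) i j = _
  rw [Matrix.mul_apply]
  by_cases h : (j : ℕ) + 2 = (i : ℕ) + s + t
  · have hl : (i : ℕ) + s - 1 < k := by omega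
    rw [Finset.sum_eq_single (⟨(i : ℕ) + s - 1, hl⟩ : Fin k)]
    · simp only [Emat]
      have c1 : ((⟨(i : ℕ) + s - 1, hl⟩ : Fin k) : ℕ) + 1 = (i : ℕ) + s := by
        show ((i : ℕ) + s - 1) + 1 = (i : ℕ) + s; omega
      have c2 : (j : ℕ) + 1 = ((⟨(i : ℕ) + s - 1, hl⟩ : Fin k) : ℕ) + t := by
        show (j : ℕ) + 1 = ((i : ℕ) + s - 1) + t; omega
      rw [if_pos c1, if_pos c2, if_pos h]
      have h1 : ((((i : ℕ) + s - 1 : ℕ) : ℂ)) + 1 = ((i : ℕ) : ℂ) + (s : ℂ) := by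
        have hn : ((i : ℕ) + s - 1) + 1 = (i : ℕ) + s := by omega
        calc ((((i : ℕ) + s - 1 : ℕ) : ℂ)) + 1
            = (((((i : ℕ) + s - 1) + 1 : ℕ)) : ℂ) := by push_cast; ring
          _ = (((i : ℕ) + s : ℕ) : ℂ) := by rw [hn]
          _ = ((i : ℕ) : ℂ) + (s : ℂ) := by push_cast; ring
      show ((i : ℕ) + 1 : ℂ) * ((((i : ℕ) + s - 1 : ℕ) : ℂ) + 1) = _
      rw [h1]
    · intro b _ hb
      have : ¬ ((b : ℕ) + 1 = (i : ℕ) + s) := by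
        intro hc
        apply hb
        apply Fin.ext
        simp
        omega
      simp only [Emat, if_neg this, zero_mul]
    · intro hmem; exact absurd (Finset.mem_univ _) hmem
  · rw [if_neg h]
    apply Finset.sum_eq_zero
    intro l _
    simp only [Emat]
    by_cases h1 : (l : ℕ) + 1 = (i : ℕ) + s
    · have h2 : ¬ ((j : ℕ) + 1 = (l : ℕ) + t) := by omega
      rw [if_neg h2, mul_zero]
    · rw [if_neg h1, zero_mul]

lemma Emat_bracket (k s t : ℕ) (hs : 1 ≤ s) (ht : 1 ≤ t) :
    Emat k s * Emat k t - Emat k t * Emat k s = ((s : ℂ) - t) • Emat k (s + t - 1) := by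
  rw [Emat_mul k s t hs ht, Emat_mul k t s ht hs]
  funext i j
  show _ - _ = ((s : ℂ) - t) * _
  simp only [Emat]
  by_cases h : (j : ℕ) + 2 = (i : ℕ) + s + t
  · rw [if_pos h, if_pos (by omega), if_pos (by omega)]
    ring
  · rw [if_neg h, if_neg (by omega), if_neg (by omega)]
    simp

lemma Emat_eq_zero (k m : ℕ) (h : k < m) : Emat k m = 0 := by
  funext i j
  simp only [Emat]
  rw [if_neg (by omega)]
  rfl

lemma Emat_bracket_mem_uk (k s t : ℕ) (hs : 1 ≤ s) (ht : 2 ≤ t) :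
    Emat k s * Emat k t - Emat k t * Emat k s ∈ ukAlg k := by
  rw [Emat_bracket k s t hs (by omega)]
  apply Submodule.smul_mem
  by_cases hk : s + t - 1 ≤ k
  · exact Submodule.subset_span ⟨s + t - 1, ⟨by omega, hk⟩, rfl⟩
  · rw [Emat_eq_zero k _ (by omega)]
    exact Submodule.zero_mem _

lemma bracket_uk_mem (k : ℕ) (x : Matrix (Fin k) (Fin k) ℂ)
    (hxgen : ∃ s, 1 ≤ s ∧ x = Emat k s) :
    ∀ y ∈ ukAlg k, x * y - y * x ∈ ukAlg k := by
  obtain ⟨s, hs, rfl⟩ := hxgen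
  intro y hy
  induction hy using Submodule.span_induction with
  | mem z hz =>
    obtain ⟨t, ⟨ht2, _⟩, rfl⟩ := hz
    exact Emat_bracket_mem_uk k s t hs ht2
  | zero => simp
  | add a b _ _ ha hb =>
    have : Emat k s * (a + b) - (a + b) * Emat k s =
        (Emat k s * a - a * Emat k s) + (Emat k s * b - b * Emat k s) := by
      noncomm_ring
    rw [this]; exact Submodule.add_mem _ ha hb
  | smul c a _ ha =>
    have : Emat k s * (c • a) - (c • a) * Emat k s =
        c • (Emat k s * a - a * Emat k s) := by
      rw [mul_smul_comm, smul_mul_assoc, smul_sub]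
    rw [this]; exact Submodule.smul_mem _ c ha

lemma ideal_part (k : ℕ) : ∀ x ∈ gkAlg k, ∀ y ∈ ukAlg k, x * y - y * x ∈ ukAlg k := by
  intro x hx
  induction hx using Submodule.span_induction with
  | mem z hz =>
    obtain ⟨s, ⟨hs1, _⟩, rfl⟩ := hz
    exact bracket_uk_mem k _ ⟨s, hs1, rfl⟩
  | zero => intro y _; simp
  | add a b _ _ ha hb =>
    intro y hy
    have : (a + b) * y - y * (a + b) = (a * y - y * a) + (b * y - y * b) := by noncomm_ring
    rw [this]; exact Submodule.add_mem _ (ha y hy) (hb y hy)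
  | smul c a _ ha =>
    intro y hy
    have : (c • a) * y - y * (c • a) = c • (a * y - y * a) := by
      rw [mul_smul_comm, smul_mul_assoc, smul_sub]
    rw [this]; exact Submodule.smul_mem _ c (ha y hy)

/-- Matrices supported on entries with `j ≥ i + m`. -/
noncomputable def shiftSub (k m : ℕ) : Submodule ℂ (Matrix (Fin k) (Fin k) ℂ) where
  carrier := {A | ∀ i j : Fin k, (j : ℕ) < (i : ℕ) + m → A i j = 0}
  add_mem' := by
    intro a b ha hb i j hij
    show a i j + b i j = 0
    rw [ha i j hij, hb i j hij, add_zero]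
  zero_mem' := by intro i j _; rfl
  smul_mem' := by
    intro c a ha i j hij
    show c * a i j = 0
    rw [ha i j hij, mul_zero]

lemma Emat_mem_shiftSub (k s : ℕ) (hs : 2 ≤ s) : Emat k s ∈ shiftSub k 1 := by
  intro i j hij
  simp only [Emat]
  rw [if_neg (by omega)]

lemma uk_le_shiftSub (k : ℕ) : ukAlg k ≤ shiftSub k 1 := by
  rw [ukAlg, Submodule.span_le]
  rintro z ⟨s, ⟨hs2, _⟩, rfl⟩
  exact Emat_mem_shiftSub k s hs2

lemma shiftSub_mul (k a b : ℕ) {A B : Matrix (Fin k) (Fin k) ℂ}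
    (hA : A ∈ shiftSub k a) (hB : B ∈ shiftSub k b) : A * B ∈ shiftSub k (a + b) := by
  intro i j hij
  show (A * B) i j = 0
  rw [Matrix.mul_apply]
  apply Finset.sum_eq_zero
  intro l _
  by_cases h1 : (l : ℕ) < (i : ℕ) + a
  · rw [hA i l h1, zero_mul]
  · have h2 : (j : ℕ) < (l : ℕ) + b := by omega
    rw [hB l j h2, mul_zero]

lemma shiftSub_bot (k : ℕ) : shiftSub k k = ⊥ := by
  rw [eq_bot_iff]
  intro A hA
  have : A = 0 := by
    funext i j
    exact hA i j (by omega)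
  simp [this]

lemma lcsU_le_shiftSub (k : ℕ) : ∀ n, lcsU k n ≤ shiftSub k (n + 1) := by
  intro n
  induction n with
  | zero => exact uk_le_shiftSub k
  | succ n ih =>
    show lcsU k (n + 1) ≤ _
    rw [lcsU, Submodule.span_le]
    rintro z ⟨x, hx, y, hy, rfl⟩
    have hx1 : x ∈ shiftSub k 1 := uk_le_shiftSub k hx
    have hy1 : y ∈ shiftSub k (n + 1) := ih hy
    have heq : 1 + (n + 1) = n + 2 := by omega
    have h1 : x * y ∈ shiftSub k (n + 2) := heq ▸ shiftSub_mul k 1 (n + 1) hx1 hy1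
    have h2 : y * x ∈ shiftSub k (n + 2) := shiftSub_mul k (n + 1) 1 hy1 hx1
    exact Submodule.sub_mem _ h1 h2

/-- `u_k` is a Lie ideal of `g_k`, and `u_k` is nilpotent: its lower central series
reaches zero. -/
theorem ukAlg_ideal_and_nilpotent (k : ℕ) [NeZero k] :
    (∀ x ∈ gkAlg k, ∀ y ∈ ukAlg k, x * y - y * x ∈ ukAlg k) ∧
    (∃ N : ℕ, lcsU k N = ⊥) := by
  constructor
  · exact ideal_part k
  · refine ⟨k - 1, le_bot_iff.mp ?_⟩
    have h1 := lcsU_le_shiftSub k (k - 1)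
    have hk : 1 ≤ k := Nat.one_le_iff_ne_zero.mpr (NeZero.ne k)
    have h2 : (k - 1) + 1 = k := by omega
    rw [h2, shiftSub_bot] at h1
    exact h1
end

section
/- For every A ∈ G_k and every x ∈ g_k, the conjugate A·x·A⁻¹ lies in g_k; that is, the subspace g_k of gl_k(ℂ) is invariant under the adjoint action Ad(A)(x) = A x A⁻¹ of the group G_k. -/
/-- `G_k = { M(a) : a_1 ≠ 0 }`. -/
noncomputable def Gset (k : ℕ) [NeZero k] : Set (Matrix (Fin k) (Fin k) ℂ) :=
  {A | ∃ a : Fin k → ℂ, a 0 ≠ 0 ∧ A = Mmat k a}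

/-!
Read `M = M(a)` as the matrix, acting on row vectors, of the substitution `h ↦ h ∘ f` on
`tℂ⟦t⟧ / t^(k+1)` in the basis `t, …, t^k`, where `f = a₁ t + ⋯ + a_k t^k`: its `i`-th row holds
the coefficients of `f^i`. Likewise `e_s` is the matrix of the vector field `t^s d/dt`. By the chain
rule, `g · (f^i)' = i f^(i+s-1)` for `g = f^s / f'`, which says `e_s M = M y` with `y` the matrix of
`g d/dt`, a combination of the `e_r`. Hence `M⁻¹ g_k M ⊆ g_k`; the two spaces have the same
dimension, so they are equal and `M g_k M⁻¹ = g_k` as well.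
-/

open Finset PowerSeries

theorem Submodule.map_symm_le_of_map_le {K V : Type*} [DivisionRing K] [AddCommGroup V]
    [Module K V] {p : Submodule K V} [FiniteDimensional K p] (e : V ≃ₗ[K] V)
    (h : p.map e.toLinearMap ≤ p) : p.map e.symm.toLinearMap ≤ p :=
  ((map_symm_eq_iff e).mpr (eq_of_le_of_finrank_eq h (e.finrank_map_eq p))).le

theorem Submodule.mul_mul_inv_mem_span_of_inv_mul_mul_mem {K A : Type*} [Field K] [Ring A]
    [Algebra K A] {S : Set A} [FiniteDimensional K (span K S)] (u : Aˣ)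
    (h : ∀ x ∈ S, ↑u⁻¹ * x * u ∈ span K S) {x : A} (hx : x ∈ span K S) :
    u * x * ↑u⁻¹ ∈ span K S := by
  let e := (MulSemiringAction.toAlgEquiv K A (ConjAct.toConjAct u⁻¹)).toLinearEquiv
  have he : (span K S).map e.toLinearMap ≤ span K S :=
    (map_span_le _ _ _).mpr fun y hy => by simpa [e, ConjAct.units_smul_def] using h y hy
  simpa [e, ConjAct.units_smul_def] using map_symm_le_of_map_le e he ⟨x, hx, rfl⟩

theorem PowerSeries.coeff_pow_eq_sum_antidiagonalTuple {R : Type*} [CommSemiring R]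
    (φ : R⟦X⟧) (m n : ℕ) :
    coeff n (φ ^ m) = ∑ s ∈ Nat.antidiagonalTuple m n, ∏ l, coeff (s l) φ := by
  rw [← Fin.prod_const, coeff_prod, ← piAntidiag_univ_fin_eq_antidiagonalTuple, finsuppAntidiag,
    sum_map, ← sum_attach (piAntidiag _ _)]
  rfl

theorem PowerSeries.coeff_pow_of_lt {R : Type*} [CommSemiring R] {φ : R⟦X⟧}
    (hφ : constantCoeff φ = 0) {m n : ℕ} (h : n < m) : coeff n (φ ^ m) = 0 :=
  coeff_of_lt_order _ ((Nat.cast_lt.mpr h).trans_le (le_order_pow_of_constantCoeff_eq_zero m hφ))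

theorem PowerSeries.coeff_pow_self {R : Type*} [CommSemiring R] {φ : R⟦X⟧}
    (hφ : constantCoeff φ = 0) (m : ℕ) : coeff m (φ ^ m) = coeff 1 φ ^ m := by
  conv_lhs => rw [eq_X_mul_shift_add_const φ, hφ, map_zero, add_zero, mul_pow,
    coeff_X_pow_mul', if_pos le_rfl, Nat.sub_self, coeff_zero_eq_constantCoeff, map_pow]
  simp

noncomputable def seriesOfCoeffs (k : ℕ) (a : Fin k → ℂ) : ℂ⟦X⟧ :=
  mk fun n => if h : 1 ≤ n ∧ n ≤ k then a ⟨n - 1, by omega⟩ else 0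

theorem constantCoeff_seriesOfCoeffs (k : ℕ) (a : Fin k → ℂ) :
    constantCoeff (seriesOfCoeffs k a) = 0 := by
  simp [seriesOfCoeffs, ← coeff_zero_eq_constantCoeff_apply]

theorem coeff_one_seriesOfCoeffs (k : ℕ) [NeZero k] (a : Fin k → ℂ) :
    coeff 1 (seriesOfCoeffs k a) = a 0 := by
  simp [seriesOfCoeffs, Nat.one_le_iff_ne_zero.mpr (NeZero.ne k)]

noncomputable def powMatrix {R : Type*} [CommSemiring R] (k : ℕ) (f : R⟦X⟧) :
    Matrix (Fin k) (Fin k) R :=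
  Matrix.of fun i j => coeff ((j : ℕ) + 1) (f ^ ((i : ℕ) + 1))

theorem Mmat_eq_powMatrix (k : ℕ) (a : Fin k → ℂ) :
    Mmat k a = powMatrix k (seriesOfCoeffs k a) := by
  ext i j
  rw [powMatrix, Matrix.of_apply, coeff_pow_eq_sum_antidiagonalTuple]
  simp only [Mmat, seriesOfCoeffs, coeff_mk]
  refine sum_filter_of_ne fun s _ hs l => Nat.pos_of_ne_zero fun hl => hs ?_
  exact prod_eq_zero (mem_univ l) (by simp [hl])

theorem powMatrix_isUpperTriangular {R : Type*} [CommSemiring R] {k : ℕ} {f : R⟦X⟧}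
    (hf : constantCoeff f = 0) : (powMatrix k f).IsUpperTriangular :=
  fun _ _ hij => coeff_pow_of_lt hf (Nat.succ_lt_succ hij)

theorem isUnit_det_powMatrix {R : Type*} [CommRing R] {k : ℕ} {f : R⟦X⟧}
    (hf : constantCoeff f = 0) (h₁ : IsUnit (coeff 1 f)) : IsUnit (powMatrix k f).det := by
  rw [Matrix.det_of_isUpperTriangular (powMatrix_isUpperTriangular hf), IsUnit.prod_iff]
  exact fun i _ => by simpa [powMatrix, coeff_pow_self hf] using h₁.pow (i + 1)

noncomputable def vectorFieldMatrix (k : ℕ) (g : ℂ⟦X⟧) : Matrix (Fin k) (Fin k) ℂ :=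
  ∑ r : Fin k, coeff ((r : ℕ) + 1) g • Emat k (r + 1)

theorem vectorFieldMatrix_mem_gkAlg (k : ℕ) (g : ℂ⟦X⟧) :
    vectorFieldMatrix k g ∈ gkAlg k :=
  Submodule.sum_mem _ fun r _ =>
    Submodule.smul_mem _ _ (Submodule.subset_span ⟨r + 1, ⟨by omega, r.isLt⟩, rfl⟩)

theorem vectorFieldMatrix_apply (k : ℕ) (g : ℂ⟦X⟧) (m j : Fin k) :
    vectorFieldMatrix k g m j =
      if (m : ℕ) ≤ j then ((m : ℂ) + 1) * coeff ((j : ℕ) - m + 1) g else 0 := by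
  simp only [vectorFieldMatrix, Matrix.sum_apply, Matrix.smul_apply, Emat, smul_eq_mul, mul_ite,
    mul_zero]
  split_ifs with hmj
  · rw [sum_eq_single ⟨j - m, by omega⟩
      (fun r _ hr => if_neg fun h => hr (Fin.ext (by simp; omega))) (by simp),
      if_pos (by simp; omega), mul_comm]
  · exact sum_eq_zero fun r _ => if_neg (by omega)

theorem sum_coeff_mul_vectorFieldMatrix (k : ℕ) {g : ℂ⟦X⟧} (hg : constantCoeff g = 0)
    (φ : ℂ⟦X⟧) (j : Fin k) :
    ∑ m : Fin k, coeff ((m : ℕ) + 1) φ * vectorFieldMatrix k g m j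
      = coeff ((j : ℕ) + 1) (g * d⁄dX ℂ φ) := by
  have hjk : (j : ℕ) < k := j.isLt
  simp only [vectorFieldMatrix_apply, mul_ite, mul_zero]
  rw [Fin.sum_univ_eq_sum_range (fun m => if m ≤ (j : ℕ) then
      coeff (m + 1) φ * ((m + 1 : ℂ) * coeff ((j : ℕ) - m + 1) g) else 0), ← sum_filter,
    show (range k).filter (· ≤ (j : ℕ)) = range (j + 1) by ext; simp; omega,
    coeff_mul, Nat.sum_antidiagonal_succ, coeff_zero_eq_constantCoeff_apply, hg, zero_mul,
    zero_add, ← Nat.sum_antidiagonal_swap, Nat.sum_antidiagonal_eq_sum_range_succ_mk]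
  refine sum_congr rfl fun m _ => ?_
  simp only [Prod.swap, coeff_derivative]
  ring

theorem Emat_mul_powMatrix_apply {k s : ℕ} (hs : 1 ≤ s) {f : ℂ⟦X⟧}
    (hf : constantCoeff f = 0) (i j : Fin k) :
    (Emat k s * powMatrix k f) i j =
      ((i : ℂ) + 1) * coeff ((j : ℕ) + 1) (f ^ ((i : ℕ) + s)) := by
  have hjk : (j : ℕ) < k := j.isLt
  simp only [Matrix.mul_apply, Emat, powMatrix, Matrix.of_apply, ite_mul, zero_mul]
  by_cases his : (i : ℕ) + s ≤ k
  · rw [sum_eq_single ⟨i + s - 1, by omega⟩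
      (fun r _ hr => if_neg fun h => hr (Fin.ext (by simp; omega))) (by simp),
      if_pos (by simp; omega)]
    simp only [show (i : ℕ) + s - 1 + 1 = i + s by omega]
  · -- row `i + s - 1` lies outside the matrix, but `f ^ (i + s)` vanishes to order `> k` anyway
    rw [sum_eq_zero fun r _ => if_neg (by omega), coeff_pow_of_lt hf (by omega), mul_zero]

theorem Emat_mul_powMatrix {k s : ℕ} (hs : 1 ≤ s) {f : ℂ⟦X⟧}
    (hf : constantCoeff f = 0) (h₁ : coeff 1 f ≠ 0) :
    Emat k s * powMatrix k f =
      powMatrix k f * vectorFieldMatrix k (f ^ s * (d⁄dX ℂ f)⁻¹) := by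
  set g := f ^ s * (d⁄dX ℂ f)⁻¹
  have hg : constantCoeff g = 0 := by simp [g, hf, zero_pow (by omega : s ≠ 0)]
  have hf' : constantCoeff (d⁄dX ℂ f) ≠ 0 := by
    simpa [← coeff_zero_eq_constantCoeff_apply, coeff_derivative] using h₁
  have hgf : g * d⁄dX ℂ f = f ^ s := by
    rw [mul_assoc, PowerSeries.inv_mul_cancel _ hf', mul_one]
  have chain_rule (n : ℕ) : g * d⁄dX ℂ (f ^ (n + 1)) = ((n : ℂ) + 1) • f ^ (n + s) := by
    rw [Derivation.leibniz_pow, Nat.add_sub_cancel, smul_eq_mul (f ^ n), mul_smul_comm,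
      ← mul_assoc, mul_comm g, mul_assoc, hgf, ← pow_add, ← Nat.cast_smul_eq_nsmul ℂ]
    push_cast
    rfl
  ext i j
  rw [Emat_mul_powMatrix_apply hs hf, Matrix.mul_apply]
  simp only [powMatrix, Matrix.of_apply]
  rw [sum_coeff_mul_vectorFieldMatrix k hg, chain_rule, coeff_smul, smul_eq_mul]

/-- For every `A ∈ G_k` and `x ∈ g_k`, the conjugate `A·x·A⁻¹` lies in `g_k`:
`g_k` is invariant under the adjoint action of `G_k`. -/
theorem gkAlg_adjoint_invariant (k : ℕ) [NeZero k]
    (A : Matrix (Fin k) (Fin k) ℂ) (hA : A ∈ Gset k)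
    (x : Matrix (Fin k) (Fin k) ℂ) (hx : x ∈ gkAlg k) :
    A * x * A⁻¹ ∈ gkAlg k := by
  obtain ⟨a, ha, rfl⟩ := hA
  rw [Mmat_eq_powMatrix]
  set f := seriesOfCoeffs k a
  have hf : constantCoeff f = 0 := constantCoeff_seriesOfCoeffs k a
  have h₁ : coeff 1 f ≠ 0 := by rwa [coeff_one_seriesOfCoeffs]
  have hdet : IsUnit (powMatrix k f).det := isUnit_det_powMatrix hf h₁.isUnit
  refine Submodule.mul_mul_inv_mem_span_of_inv_mul_mul_mem
    (Matrix.nonsingInvUnit _ hdet) ?_ hx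
  rintro _ ⟨s, ⟨hs, -⟩, rfl⟩
  have hconj : (powMatrix k f)⁻¹ * Emat k s * powMatrix k f
      = vectorFieldMatrix k (f ^ s * (d⁄dX ℂ f)⁻¹) := by
    rw [Matrix.mul_assoc, Emat_mul_powMatrix hs hf h₁, ← Matrix.mul_assoc,
      Matrix.nonsing_inv_mul _ hdet, Matrix.one_mul]
  exact hconj ▸ vectorFieldMatrix_mem_gkAlg k _
end

section
/- (Elashvili condition for the adjoint action, content of Theorem 4.1.) The image of the map ad(e_1) : g_k → g_k, x ↦ [x, e_1], equals u_k = span_ℂ{e_2, …, e_k}; the centralizer z_{g_k}(e_1) = { x ∈ g_k : [x, e_1] = 0 } equals ℂ·e_1 and is abelian; and g_k decomposes as the direct sum g_k = [g_k, e_1] ⊕ z_{g_k}(e_1). -/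
/-!
Each `e_s` is an eigenvector of `ad(e_1)` with eigenvalue `s - 1`, so `ad(e_1)` kills `e_1` and
maps `u_k` onto itself; since `g_k = u_k ⊕ ℂ e_1`, this gives the image. For the centralizer,
write `x = u + c e_1` with `u ∈ u_k`: then `[u, e_1] = 0`, and a matrix commuting with the
diagonal matrix `e_1 = diag(1, …, k)` of distinct entries is diagonal, while `u` is strictly
upper triangular, so `u = 0`.
-/

theorem Submodule.map_span_image_eq_of_forall_eq_smul {K V ι : Type*} [Field K]
    [AddCommGroup V] [Module K V] (f : V →ₗ[K] V) (v : ι → V) (c : ι → K) {S : Set ι}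
    (hc : ∀ i ∈ S, c i ≠ 0) (hf : ∀ i ∈ S, f (v i) = c i • v i) :
    (span K (v '' S)).map f = span K (v '' S) := by
  rw [map_span]
  apply le_antisymm <;> rw [span_le]
  · rintro _ ⟨_, ⟨i, hi, rfl⟩, rfl⟩
    rw [hf i hi]
    exact smul_mem _ _ (subset_span ⟨i, hi, rfl⟩)
  · rintro _ ⟨i, hi, rfl⟩
    have hv : v i = (c i)⁻¹ • f (v i) := by
      rw [hf i hi, smul_smul, inv_mul_cancel₀ (hc i hi), one_smul]
    rw [SetLike.mem_coe, hv]
    exact smul_mem _ _ (subset_span ⟨v i, ⟨i, hi, rfl⟩, rfl⟩)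

theorem Matrix.apply_eq_zero_of_mul_diagonal_eq {n R : Type*} [Fintype n] [DecidableEq n]
    [CommRing R] [NoZeroDivisors R] {d : n → R} (hd : Function.Injective d)
    {x : Matrix n n R} (hx : x * diagonal d = diagonal d * x) {i j : n} (hij : i ≠ j) :
    x i j = 0 := by
  have hij' : x i j * d j = d i * x i j := by
    simpa only [mul_diagonal, diagonal_mul] using congrFun (congrFun hx i) j
  have hd' : d j - d i ≠ 0 := sub_ne_zero.mpr (hd.ne hij.symm)
  exact (mul_eq_zero.mp (by linear_combination hij' : x i j * (d j - d i) = 0)).resolve_right hd'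

lemma Emat_one (k : ℕ) : Emat k 1 = Matrix.diagonal (fun i : Fin k => ((i : ℕ) + 1 : ℂ)) := by
  ext i j
  simp only [Emat, Matrix.diagonal_apply, add_left_inj, Fin.val_inj, eq_comm]

/-- `ad(e_1)`, in the convention `x ↦ [x, e_1]`. -/
noncomputable def adEmatOne (k : ℕ) : Matrix (Fin k) (Fin k) ℂ →ₗ[ℂ] Matrix (Fin k) (Fin k) ℂ :=
  LinearMap.mulRight ℂ (Emat k 1) - LinearMap.mulLeft ℂ (Emat k 1)

lemma adEmatOne_apply (k : ℕ) (x : Matrix (Fin k) (Fin k) ℂ) :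
    adEmatOne k x = x * Emat k 1 - Emat k 1 * x := rfl

lemma adEmatOne_Emat (k s : ℕ) : adEmatOne k (Emat k s) = ((s : ℂ) - 1) • Emat k s := by
  ext i j
  simp only [adEmatOne_apply, Emat_one, Matrix.sub_apply, Matrix.mul_diagonal,
    Matrix.diagonal_mul, Matrix.smul_apply, smul_eq_mul]
  by_cases h : (j : ℕ) + 1 = (i : ℕ) + s
  · have hc : ((j : ℕ) : ℂ) + 1 = (i : ℕ) + s := by exact_mod_cast h
    simp only [Emat, if_pos h]
    linear_combination ((i : ℂ) + 1) * hc
  · simp [Emat, h]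

lemma adEmatOne_Emat_one (k : ℕ) : adEmatOne k (Emat k 1) = 0 := by
  simp [adEmatOne_Emat]

lemma Emat_apply_eq_zero_of_mem_ukAlg {k : ℕ} {u : Matrix (Fin k) (Fin k) ℂ} (hu : u ∈ ukAlg k)
    {i j : Fin k} (hij : (j : ℕ) ≤ i) : u i j = 0 := by
  induction hu using Submodule.span_induction with
  | mem y hy =>
    obtain ⟨s, ⟨hs, -⟩, rfl⟩ := hy
    exact if_neg (by omega)
  | zero => rfl
  | add y z _ _ hy hz => simp [hy, hz]
  | smul a y _ hy => simp [hy]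

lemma ukAlg_sup_span_Emat_one (k : ℕ) [NeZero k] :
    ukAlg k ⊔ Submodule.span ℂ {Emat k 1} = gkAlg k := by
  have hk : 1 ≤ k := Nat.one_le_iff_ne_zero.mpr (NeZero.ne k)
  have hset : {s | 1 ≤ s ∧ s ≤ k} = {s | 2 ≤ s ∧ s ≤ k} ∪ {1} := by
    ext s
    simp only [Set.mem_union, Set.mem_ofPred_eq, Set.mem_singleton_iff]
    omega
  rw [ukAlg, gkAlg, ← Submodule.span_union, hset, Set.image_union, Set.image_singleton]

lemma ukAlg_inf_span_Emat_one (k : ℕ) [NeZero k] :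
    ukAlg k ⊓ Submodule.span ℂ {Emat k 1} = ⊥ := by
  refine eq_bot_iff.mpr fun x ⟨hxu, hxe⟩ => ?_
  obtain ⟨c, rfl⟩ := Submodule.mem_span_singleton.mp hxe
  have hc : c = 0 := by
    simpa [Emat] using Emat_apply_eq_zero_of_mem_ukAlg hxu (le_refl ((0 : Fin k) : ℕ))
  rw [Submodule.mem_bot, hc, zero_smul]

lemma map_adEmatOne_ukAlg (k : ℕ) : (ukAlg k).map (adEmatOne k) = ukAlg k :=
  Submodule.map_span_image_eq_of_forall_eq_smul _ _ (fun s : ℕ => (s : ℂ) - 1)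
    (fun s hs => sub_ne_zero.mpr (by exact_mod_cast (by have := hs.1; omega : s ≠ 1)))
    (fun s _ => adEmatOne_Emat k s)

lemma map_adEmatOne_gkAlg (k : ℕ) [NeZero k] : (gkAlg k).map (adEmatOne k) = ukAlg k := by
  rw [← ukAlg_sup_span_Emat_one, Submodule.map_sup, map_adEmatOne_ukAlg, Submodule.map_span,
    Set.image_singleton, adEmatOne_Emat_one, Submodule.span_singleton_eq_bot.mpr rfl, sup_bot_eq]

lemma eq_zero_of_mem_ukAlg_of_adEmatOne_eq_zero {k : ℕ} {u : Matrix (Fin k) (Fin k) ℂ}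
    (hu : u ∈ ukAlg k) (had : adEmatOne k u = 0) : u = 0 := by
  have hd : Function.Injective (fun i : Fin k => ((i : ℕ) + 1 : ℂ)) := fun i j h =>
    Fin.ext (by exact_mod_cast add_right_cancel h)
  have hcomm := sub_eq_zero.mp had
  rw [Emat_one] at hcomm
  ext i j
  rcases le_or_gt (j : ℕ) i with hji | hij
  · exact Emat_apply_eq_zero_of_mem_ukAlg hu hji
  · exact Matrix.apply_eq_zero_of_mul_diagonal_eq hd hcomm (Fin.ne_of_lt hij)

lemma mem_gkAlg_and_adEmatOne_eq_zero_iff (k : ℕ) [NeZero k] (x : Matrix (Fin k) (Fin k) ℂ) :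
    x ∈ gkAlg k ∧ adEmatOne k x = 0 ↔ x ∈ Submodule.span ℂ {Emat k 1} := by
  constructor
  · rintro ⟨hx, had⟩
    rw [← ukAlg_sup_span_Emat_one, Submodule.mem_sup] at hx
    obtain ⟨u, hu, y, hy, rfl⟩ := hx
    obtain ⟨c, rfl⟩ := Submodule.mem_span_singleton.mp hy
    rw [map_add, map_smul, adEmatOne_Emat_one, smul_zero, add_zero] at had
    rwa [eq_zero_of_mem_ukAlg_of_adEmatOne_eq_zero hu had, zero_add]
  · intro hx
    obtain ⟨c, rfl⟩ := Submodule.mem_span_singleton.mp hx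
    refine ⟨?_, by rw [map_smul, adEmatOne_Emat_one, smul_zero]⟩
    rw [← ukAlg_sup_span_Emat_one]
    exact Submodule.mem_sup_right hx

/-- Elashvili condition for the adjoint action: the image of `ad(e_1) : g_k → g_k`,
`x ↦ [x, e_1]`, equals `u_k`; the centralizer `z_{g_k}(e_1)` equals `ℂ·e_1` and is
abelian; and `g_k = [g_k, e_1] ⊕ z_{g_k}(e_1)`. -/
theorem elashvili_adjoint (k : ℕ) [NeZero k] :
    ({z | ∃ x ∈ gkAlg k, z = x * Emat k 1 - Emat k 1 * x} = (ukAlg k : Set _)) ∧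
    ({x | x ∈ gkAlg k ∧ x * Emat k 1 - Emat k 1 * x = 0}
        = (Submodule.span ℂ {Emat k 1} : Set (Matrix (Fin k) (Fin k) ℂ))) ∧
    (∀ x ∈ Submodule.span ℂ {Emat k 1}, ∀ y ∈ Submodule.span ℂ {Emat k 1},
        x * y = y * x) ∧
    (ukAlg k ⊔ Submodule.span ℂ {Emat k 1} = gkAlg k) ∧
    (ukAlg k ⊓ Submodule.span ℂ {Emat k 1} = ⊥) := by
  refine ⟨?_, ?_, ?_, ukAlg_sup_span_Emat_one k, ukAlg_inf_span_Emat_one k⟩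
  · ext z
    rw [SetLike.mem_coe, ← map_adEmatOne_gkAlg, Submodule.mem_map]
    exact exists_congr fun x => and_congr_right fun _ => eq_comm
  · ext x
    exact mem_gkAlg_and_adEmatOne_eq_zero_iff k x
  · intro x hx y hy
    obtain ⟨a, rfl⟩ := Submodule.mem_span_singleton.mp hx
    obtain ⟨b, rfl⟩ := Submodule.mem_span_singleton.mp hy
    exact (((Commute.refl (Emat k 1)).smul_left a).smul_right b).eq
end

section
/- The one-dimensional subspace h = ℂ·e_1 is a Cartan subalgebra of g_k: h is a nilpotent (indeed abelian) Lie subalgebra, and h is self-normalizing, i.e. { x ∈ g_k : [x, h] ⊆ h } = h. -/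
section aux
variable {k : ℕ} [NeZero k]

/-- structural property of elements of `g_k` -/
def Pprop (k : ℕ) [NeZero k] (x : Matrix (Fin k) (Fin k) ℂ) : Prop :=
  (∀ i j : Fin k, (j : ℕ) < (i : ℕ) → x i j = 0) ∧
  ∀ (i j : Fin k), (i : ℕ) ≤ (j : ℕ) →
    x i j = ((i : ℕ) + 1) * x 0 ⟨(j : ℕ) - (i : ℕ), lt_of_le_of_lt (Nat.sub_le _ _) j.isLt⟩

lemma Pprop_Emat (s : ℕ) (hs : 1 ≤ s) : Pprop k (Emat k s) := by
  constructor
  · intro i j hji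
    simp only [Emat]
    rw [if_neg]
    omega
  · intro i j hij
    simp only [Emat, Fin.val_zero, Fin.val_mk, Nat.zero_add]
    by_cases h : (j : ℕ) + 1 = (i : ℕ) + s
    · rw [if_pos h, if_pos (by omega)]
      ring
    · rw [if_neg h, if_neg (by omega), mul_zero]

lemma Pprop_gk {x : Matrix (Fin k) (Fin k) ℂ} (hx : x ∈ gkAlg k) : Pprop k x := by
  induction hx using Submodule.span_induction with
  | mem y hy =>
    obtain ⟨s, hs, rfl⟩ := hy
    exact Pprop_Emat s hs.1
  | zero => exact ⟨fun _ _ _ => rfl, fun i j _ => by simp [Matrix.zero_apply]⟩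
  | add y z _ _ hy hz =>
    refine ⟨fun i j h => ?_, fun i j h => ?_⟩
    · simp [Matrix.add_apply, hy.1 i j h, hz.1 i j h]
    · simp [Matrix.add_apply, hy.2 i j h, hz.2 i j h]; ring
  | smul c y _ hy =>
    refine ⟨fun i j h => ?_, fun i j h => ?_⟩
    · simp [Matrix.smul_apply, hy.1 i j h]
    · simp [Matrix.smul_apply, hy.2 i j h]; ring

lemma E1_mem_gk : Emat k 1 ∈ gkAlg k :=
  Submodule.subset_span ⟨1, ⟨le_refl 1, NeZero.one_le⟩, rfl⟩

omit [NeZero k] in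
lemma commutator_apply (x : Matrix (Fin k) (Fin k) ℂ) (i j : Fin k) :
    (x * Emat k 1 - Emat k 1 * x) i j = x i j * ((j : ℕ) - (i : ℕ) : ℂ) := by
  simp only [Matrix.sub_apply, Matrix.mul_apply, Emat]
  rw [Finset.sum_eq_single j, Finset.sum_eq_single i]
  · simp only [show ∀ m : ℕ, m + 1 = m + 1 ↔ True from fun m => iff_of_true rfl trivial]
    simp; ring
  · intro b _ hb
    rw [if_neg (by simpa [Fin.val_eq_val] using fun h => hb (by omega)), zero_mul]
  · intro h; exact absurd (Finset.mem_univ i) h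
  · intro b _ hb
    rw [if_neg (by intro h; exact hb (Fin.ext (by omega))), mul_zero]
  · intro h; exact absurd (Finset.mem_univ j) h

end aux

/-- `h = ℂ·e_1` is a Cartan subalgebra of `g_k`: it is contained in `g_k`, it is an
abelian (hence nilpotent) subalgebra, and it is self-normalizing in `g_k`:
`{ x ∈ g_k : [x, h] ⊆ h } = h`. -/
theorem span_E1_isCartan (k : ℕ) [NeZero k] :
    ((Submodule.span ℂ {Emat k 1} : Set (Matrix (Fin k) (Fin k) ℂ)) ⊆ (gkAlg k : Set _)) ∧
    (∀ x ∈ Submodule.span ℂ {Emat k 1}, ∀ y ∈ Submodule.span ℂ {Emat k 1},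
        x * y - y * x = 0) ∧
    ({x | x ∈ gkAlg k ∧ ∀ y ∈ Submodule.span ℂ {Emat k 1},
          x * y - y * x ∈ Submodule.span ℂ {Emat k 1}}
        = (Submodule.span ℂ {Emat k 1} : Set (Matrix (Fin k) (Fin k) ℂ))) := by
  refine ⟨?_, ?_, ?_⟩
  · exact SetLike.coe_subset_coe.mpr
      (Submodule.span_le.mpr (Set.singleton_subset_iff.mpr E1_mem_gk))
  · intro x hx y hy
    rw [Submodule.mem_span_singleton] at hx hy
    obtain ⟨a, rfl⟩ := hx
    obtain ⟨b, rfl⟩ := hy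
    simp [smul_smul, mul_comm]
  · ext x
    simp only [Set.mem_setOf_eq, SetLike.mem_coe]
    constructor
    · rintro ⟨hxg, hxn⟩
      have hP := Pprop_gk hxg
      have h1 := hxn (Emat k 1) (Submodule.mem_span_singleton_self _)
      rw [Submodule.mem_span_singleton] at h1
      obtain ⟨c, hc⟩ := h1
      have hc0 : c = 0 := by
        have := congrFun (congrFun hc 0) 0
        rw [commutator_apply] at this
        simp [Emat] at this
        exact this
      have hdiag : ∀ i j : Fin k, i ≠ j → x i j = 0 := by
        intro i j hij
        have h2 := congrFun (congrFun hc i) j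
        rw [commutator_apply, hc0] at h2
        simp only [zero_smul, Matrix.zero_apply] at h2
        rcases mul_eq_zero.mp h2.symm with h | h
        · exact h
        · exfalso
          have hnat : (j : ℕ) = (i : ℕ) := by exact_mod_cast sub_eq_zero.mp h
          exact hij (Fin.ext hnat.symm)
      rw [Submodule.mem_span_singleton]
      refine ⟨x 0 0, ?_⟩
      have hii : ∀ i : Fin k, x i i = ((i : ℕ) + 1) * x 0 0 := by
        intro i
        have h3 := hP.2 i i (le_refl _)
        have h4 : (⟨(i : ℕ) - (i : ℕ), lt_of_le_of_lt (Nat.sub_le _ _) i.isLt⟩ : Fin k) = 0 :=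
          Fin.ext (by simp)
        rwa [h4] at h3
      ext i j
      simp only [Matrix.smul_apply, Emat, smul_eq_mul]
      by_cases h : (j : ℕ) + 1 = (i : ℕ) + 1
      · have hij : i = j := Fin.ext (by omega)
        subst hij
        rw [if_pos h, hii i]
        ring
      · rw [if_neg h, mul_zero, hdiag i j (fun he => h (by rw [he]))]
    · intro hx
      refine ⟨Submodule.span_le.mpr (Set.singleton_subset_iff.mpr E1_mem_gk) hx, ?_⟩
      intro y hy
      rw [Submodule.mem_span_singleton] at hx hy
      obtain ⟨a, rfl⟩ := hx
      obtain ⟨b, rfl⟩ := hy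
      simp [smul_smul, mul_comm]
end

section
/- The centralizer of the matrix e_1 = diag(1, 2, …, k) in the group G_k is exactly the torus T: for A ∈ G_k, one has A·e_1 = e_1·A if and only if A = diag(λ, λ², …, λ^k) for some λ ∈ ℂ*. -/
/-- `e_1 = diag(1, 2, …, k)`. -/
def Eone (k : ℕ) : Matrix (Fin k) (Fin k) ℂ :=
  Matrix.diagonal (fun i : Fin k => ((i : ℕ) + 1 : ℂ))

/-!
A matrix commuting with a diagonal matrix with pairwise distinct entries is diagonal, so an
element `M(a)` of the centralizer of `e_1` is determined by its diagonal. The only composition of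
`i` into `i` positive parts is `1 + ⋯ + 1`, so `M(a)_{ii} = a_1^i`, and `M(a) = diag(λ, …, λ^k)`
with `λ = a_1 ≠ 0`. Conversely diagonal matrices commute.
-/

theorem Matrix.IsDiag.of_mul_diagonal_eq_diagonal_mul {n R : Type*} [Fintype n] [DecidableEq n]
    [CommRing R] [NoZeroDivisors R] {d : n → R} (hd : Function.Injective d)
    {A : Matrix n n R} (h : A * Matrix.diagonal d = Matrix.diagonal d * A) : A.IsDiag := by
  intro i j hij
  have hentry : (d j - d i) * A i j = 0 := by
    have := congrFun (congrFun h i) j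
    rw [Matrix.mul_diagonal, Matrix.diagonal_mul] at this
    linear_combination this
  exact (mul_eq_zero.mp hentry).resolve_left (sub_ne_zero.mpr (hd.ne (Ne.symm hij)))

theorem Fintype.eq_one_of_sum_eq_card {ι : Type*} [Fintype ι] {f : ι → ℕ}
    (hpos : ∀ i, 0 < f i) (hsum : ∑ i, f i = Fintype.card ι) : f = 1 := by
  have hle : ∀ i ∈ Finset.univ, (1 : ι → ℕ) i ≤ f i := fun i _ => hpos i
  funext i
  refine ((Finset.sum_eq_sum_iff_of_le hle).mp ?_ i (Finset.mem_univ i)).symm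
  simp [hsum]

theorem Finset.Nat.antidiagonalTuple_self_filter_pos (n : ℕ) :
    (Finset.Nat.antidiagonalTuple n n).filter (fun s => ∀ l, 0 < s l) = {1} := by
  ext s
  simp only [Finset.mem_filter, Finset.Nat.mem_antidiagonalTuple, Finset.mem_singleton]
  constructor
  · rintro ⟨hsum, hpos⟩
    exact Fintype.eq_one_of_sum_eq_card hpos (by simpa using hsum)
  · rintro rfl
    simp

theorem Mmat_diag (k : ℕ) [NeZero k] (a : Fin k → ℂ) (i : Fin k) :
    (Mmat k a).diag i = a 0 ^ (i.val + 1) := by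
  have hk : 1 ≤ k := NeZero.one_le
  simp [Matrix.diag, Mmat, Finset.Nat.antidiagonalTuple_self_filter_pos, hk]

/-- The centralizer of `e_1 = diag(1, …, k)` in `G_k` is exactly the torus `T`:
for `A ∈ G_k`, `A·e_1 = e_1·A` iff `A = diag(λ, λ², …, λ^k)` for some `λ ∈ ℂ*`. -/
theorem centralizer_Eone_eq_torus (k : ℕ) [NeZero k]
    (A : Matrix (Fin k) (Fin k) ℂ) (hA : A ∈ Gset k) :
    A * Eone k = Eone k * A ↔
      ∃ lam : ℂ, lam ≠ 0 ∧ A = Matrix.diagonal (fun i : Fin k => lam ^ (i.val + 1)) := by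
  obtain ⟨a, ha0, rfl⟩ := hA
  constructor
  · intro hcomm
    have hinj : Function.Injective (fun i : Fin k => ((i : ℕ) + 1 : ℂ)) :=
      fun i j h => Fin.ext (by exact_mod_cast add_right_cancel h)
    have hdiag := Matrix.IsDiag.of_mul_diagonal_eq_diagonal_mul hinj hcomm
    refine ⟨a 0, ha0, ?_⟩
    rw [← (Matrix.isDiag_iff_diagonal_diag _).mp hdiag]
    exact congrArg Matrix.diagonal (funext (Mmat_diag k a))
  · rintro ⟨lam, -, hA⟩
    rw [hA, Eone]
    exact (Matrix.commute_diagonal _ _).eq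
end

section
/- (Theorem 4.2 item 4 / Theorem 4.3 item 1, finite generation.) Let G_k act on the polynomial ring ℂ[x_1, …, x_k] — the coordinate ring of g_k with respect to the basis e_1, …, e_k — by (A·P)(x) = P(Ad(A⁻¹)(x)), where Ad(A)(y) = A y A⁻¹ and x ∈ g_k has coordinates (x_1, …, x_k). Then the subalgebra ℂ[g_k]^{G_k} of G_k-invariant polynomials is a finitely generated ℂ-algebra. -/
/-- The element of `g_k` with coordinates `c` in the basis `e_1, …, e_k`. -/
noncomputable def matOf (k : ℕ) (c : Fin k → ℂ) : Matrix (Fin k) (Fin k) ℂ :=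
  ∑ s : Fin k, c s • Emat k (s.val + 1)

/-- The coordinates of `x ∈ g_k` in the basis `e_1, …, e_k` (read off the first row,
since `(e_s)_{1,j} = δ_{j,s}`). -/
def coordOf (k : ℕ) [NeZero k] (x : Matrix (Fin k) (Fin k) ℂ) : Fin k → ℂ :=
  fun s => x 0 s

/-!
The invariant ring is `ℂ[x₁]`. Every matrix involved is upper triangular, so conjugating
`x ∈ g_k` by `A ∈ G_k` does not change its `(1,1)` entry, which is `x₁`. Conversely,
`M(t, 0, …, 0) = diag(t, t², …, t^k)` scales `x_s` by `t^(s-1)`, so an invariant polynomial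
satisfies `P(x) = P((t^(s-1) x_s)_s)` for all `t ≠ 0`, hence by continuity also for `t = 0`:
`P(x) = P(x₁, 0, …, 0)`, i.e. `P` is a polynomial in `x₁`.
-/

namespace Matrix

variable {n R : Type*} [Fintype n]

theorem IsUpperTriangular.mul_apply_self [LinearOrder n] [NonUnitalNonAssocSemiring R]
    {A B : Matrix n n R} (hA : A.IsUpperTriangular) (hB : B.IsUpperTriangular) (i : n) :
    (A * B) i i = A i i * B i i := by
  rw [mul_apply]
  refine Finset.sum_eq_single i (fun p _ hp => ?_) (by simp)
  rcases hp.lt_or_gt with hpi | hip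
  · rw [hA hpi, zero_mul]
  · rw [hB hip, mul_zero]

theorem IsUpperTriangular.inv_mul_mul_apply_self [LinearOrder n] [CommRing R] [DecidableEq n]
    {A x : Matrix n n R} (hA : A.IsUpperTriangular) (hdet : IsUnit A.det)
    (hx : x.IsUpperTriangular) (i : n) : (A⁻¹ * x * A) i i = x i i := by
  have := A.invertibleOfIsUnitDet hdet
  have hA' : A⁻¹.IsUpperTriangular := blockTriangular_inv_of_blockTriangular hA
  have hinv : A⁻¹ i i * A i i = 1 := by
    rw [← hA'.mul_apply_self hA, nonsing_inv_mul A hdet, one_apply_eq]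
  rw [IsUpperTriangular.mul_apply_self (hA'.mul hx) hA, hA'.mul_apply_self hx]
  linear_combination x i i * hinv

theorem inv_diagonal_mul_mul_diagonal_apply [DecidableEq n] {K : Type*} [Field K]
    {d : n → K} (hd : ∀ i, d i ≠ 0) (x : Matrix n n K) (i j : n) :
    ((diagonal d)⁻¹ * x * diagonal d) i j = (d i)⁻¹ * x i j * d j := by
  have hinv : (diagonal d)⁻¹ = diagonal d⁻¹ :=
    inv_eq_left_inv (by simp [diagonal_mul_diagonal, inv_mul_cancel₀ (hd _)])
  rw [hinv, mul_diagonal, diagonal_mul, Pi.inv_apply]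

end Matrix

namespace MvPolynomial

theorem eval_indicator_eq_of_weight_invariant {σ 𝕜 : Type*} [NontriviallyNormedField 𝕜]
    (P : MvPolynomial σ 𝕜) (w : σ → ℕ)
    (hP : ∀ c : σ → 𝕜, ∀ t ≠ 0, eval (fun s => t ^ w s * c s) P = eval c P) (c : σ → 𝕜) :
    eval ({s | w s = 0}.indicator c) P = eval c P := by
  have hcont : Continuous fun t : 𝕜 => eval (fun s => t ^ w s * c s) P :=
    (continuous_eval P).comp (continuous_pi fun s => (continuous_pow _).mul continuous_const)
  have hlimit := congrFun
    (Continuous.ext_on (dense_compl_singleton (0 : 𝕜)) hcont continuous_const (hP c)) 0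
  have hzero : (fun s => (0 : 𝕜) ^ w s * c s) = {s | w s = 0}.indicator c := by
    ext s
    by_cases hs : w s = 0 <;> simp [hs]
  rwa [hzero] at hlimit

theorem mem_adjoin_X_image_of_eval_indicator {σ R : Type*} [CommRing R] [IsDomain R] [Infinite R]
    {S : Set σ} {P : MvPolynomial σ R} (hP : ∀ c, eval (S.indicator c) P = eval c P) :
    P ∈ Algebra.adjoin R (X '' S) := by
  have hfix : aeval (S.indicator X) P = P := by
    refine funext fun c => ?_
    calc eval c (aeval (S.indicator X) P)
        = eval (fun s => eval c (S.indicator X s)) P := aeval_bind₁ c (S.indicator X) P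
      _ = eval (S.indicator c) P := by
        refine congrArg (fun v => eval v P) (_root_.funext fun s => ?_)
        by_cases hs : s ∈ S <;> simp [hs]
      _ = eval c P := hP c
  have hmem : P ∈ (aeval (S.indicator X)).range := ⟨P, hfix⟩
  rw [← Algebra.adjoin_range_eq_range_aeval] at hmem
  refine Algebra.adjoin_le ?_ hmem
  rintro - ⟨s, rfl⟩
  by_cases hs : s ∈ S
  · simpa [hs] using Algebra.subset_adjoin (Set.mem_image_of_mem X hs)
  · simp [hs]

end MvPolynomial

theorem le_sum_of_forall_pos {n : ℕ} {s : Fin n → ℕ} (hs : ∀ l, 0 < s l) : n ≤ ∑ l, s l := by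
  simpa using Finset.card_nsmul_le_sum Finset.univ s 1 fun l _ => hs l

theorem eq_one_of_forall_pos_of_sum_eq {n : ℕ} {s : Fin n → ℕ} (hs : ∀ l, 0 < s l)
    (hsum : ∑ l, s l = n) (l : Fin n) : s l = 1 :=
  ((Finset.sum_eq_sum_iff_of_le (f := fun _ => 1) (g := s) fun l _ => hs l).1
    (by simpa using hsum.symm) l (Finset.mem_univ l)).symm

theorem Mmat_isUpperTriangular (k : ℕ) (a : Fin k → ℂ) : (Mmat k a).IsUpperTriangular := by
  intro i j hji
  refine Finset.sum_eq_zero fun s hs => absurd ?_ (not_le.2 hji)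
  simp only [Finset.mem_filter, Finset.Nat.mem_antidiagonalTuple] at hs
  have := le_sum_of_forall_pos hs.2
  simp only [id]
  omega

theorem Mmat_apply_self (k : ℕ) [NeZero k] (a : Fin k → ℂ) (i : Fin k) :
    Mmat k a i i = a 0 ^ ((i : ℕ) + 1) := by
  have hk : 1 ≤ k := NeZero.one_le
  rw [Mmat, Finset.sum_eq_single_of_mem (fun _ => 1)]
  · simp [hk]
  · simp [Finset.Nat.mem_antidiagonalTuple]
  · intro s hs hne
    simp only [Finset.mem_filter, Finset.Nat.mem_antidiagonalTuple] at hs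
    exact absurd (funext (eq_one_of_forall_pos_of_sum_eq hs.2 hs.1)) hne

theorem Mmat_single_apply_of_ne (k : ℕ) [NeZero k] (t : ℂ) {i j : Fin k} (hij : i ≠ j) :
    Mmat k (Pi.single 0 t) i j = 0 := by
  refine Finset.sum_eq_zero fun s hs => ?_
  simp only [Finset.mem_filter, Finset.Nat.mem_antidiagonalTuple] at hs
  obtain ⟨l, hl⟩ : ∃ l, s l ≠ 1 := by
    by_contra! hone
    have : ∑ l, s l = (i : ℕ) + 1 := by simp [hone]
    exact hij (Fin.ext (by omega))
  refine Finset.prod_eq_zero (Finset.mem_univ l) ?_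
  split_ifs with hrange
  · refine Pi.single_eq_of_ne (fun h => hl ?_) _
    rw [Fin.ext_iff] at h
    simp only [Fin.val_zero] at h
    omega
  · rfl

theorem Mmat_single (k : ℕ) [NeZero k] (t : ℂ) :
    Mmat k (Pi.single 0 t) = Matrix.diagonal fun i : Fin k => t ^ ((i : ℕ) + 1) := by
  ext i j
  rcases eq_or_ne i j with rfl | hij
  · simp [Mmat_apply_self]
  · rw [Mmat_single_apply_of_ne k t hij, Matrix.diagonal_apply_ne _ hij]

theorem isUnit_det_Mmat (k : ℕ) [NeZero k] {a : Fin k → ℂ} (ha : a 0 ≠ 0) :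
    IsUnit (Mmat k a).det := by
  rw [Matrix.det_of_isUpperTriangular (Mmat_isUpperTriangular k a), isUnit_iff_ne_zero]
  exact Finset.prod_ne_zero_iff.2 fun i _ => by simpa [Mmat_apply_self] using ha

theorem matOf_isUpperTriangular (k : ℕ) (c : Fin k → ℂ) : (matOf k c).IsUpperTriangular := by
  intro i j hji
  simp only [matOf, Matrix.sum_apply, Matrix.smul_apply, Emat, id] at hji ⊢
  refine Finset.sum_eq_zero fun s _ => ?_
  rw [if_neg (by omega), smul_zero]

theorem matOf_zero_apply (k : ℕ) [NeZero k] (c : Fin k → ℂ) (j : Fin k) : matOf k c 0 j = c j := by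
  simp only [matOf, Matrix.sum_apply, Matrix.smul_apply]
  rw [Finset.sum_eq_single j (fun s _ hs => by simp [Emat, Fin.ext_iff] at hs ⊢; omega) (by simp)]
  simp [Emat]

theorem coordOf_conj_Mmat_single (k : ℕ) [NeZero k] {t : ℂ} (ht : t ≠ 0) (c : Fin k → ℂ) :
    coordOf k ((Mmat k (Pi.single 0 t))⁻¹ * matOf k c * Mmat k (Pi.single 0 t))
      = fun s : Fin k => t ^ (s : ℕ) * c s := by
  ext s
  rw [coordOf, Mmat_single, Matrix.inv_diagonal_mul_mul_diagonal_apply (fun i => pow_ne_zero _ ht),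
    matOf_zero_apply, Fin.val_zero]
  field_simp
  ring

/-- Finite generation: the algebra `ℂ[g_k]^{G_k}` of polynomials on `g_k` invariant
under the adjoint action `(A·P)(x) = P(Ad(A⁻¹)x) = P(A⁻¹ x A)` of `G_k` is a finitely
generated ℂ-algebra. -/
theorem invariant_ring_adjoint_fg (k : ℕ) [NeZero k] :
    ∃ (r : ℕ) (f : Fin r → MvPolynomial (Fin k) ℂ),
      (∀ i : Fin r, ∀ A ∈ Gset k, ∀ c : Fin k → ℂ,
          MvPolynomial.eval (coordOf k (A⁻¹ * matOf k c * A)) (f i)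
            = MvPolynomial.eval c (f i)) ∧
      (∀ P : MvPolynomial (Fin k) ℂ,
          (∀ A ∈ Gset k, ∀ c : Fin k → ℂ,
              MvPolynomial.eval (coordOf k (A⁻¹ * matOf k c * A)) P
                = MvPolynomial.eval c P) →
          P ∈ Algebra.adjoin ℂ (Set.range f)) := by
  refine ⟨1, fun _ => MvPolynomial.X 0, ?_, fun P hP => ?_⟩
  · rintro - A ⟨a, ha, rfl⟩ c
    simp only [MvPolynomial.eval_X, coordOf]
    rw [(Mmat_isUpperTriangular k a).inv_mul_mul_apply_self (isUnit_det_Mmat k ha)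
      (matOf_isUpperTriangular k c), matOf_zero_apply]
  · have hweight : {s : Fin k | (s : ℕ) = 0} = {0} := by
      ext s
      exact Fin.val_eq_zero_iff
    rw [Set.range_const, ← Set.image_singleton, ← hweight]
    refine MvPolynomial.mem_adjoin_X_image_of_eval_indicator fun c => ?_
    refine MvPolynomial.eval_indicator_eq_of_weight_invariant P _ (fun c t ht => ?_) c
    rw [← coordOf_conj_Mmat_single k ht]
    exact hP _ ⟨_, by simpa using ht, rfl⟩ c
end
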